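/- arXiv:2505.20885 — 5 statements merged into one kernel-verified Lean document; each statement's English description precedes it below -/
import Mathlib

section
/- Let T and N be positive integers and δ ∈ (0,1). Let X be a set, F a nonempty finite collection of functions X → [−1,1], x_1,…,x_T ∈ X, y_1,…,y_T ∈ {0,1}, and P_1,…,P_T probability distributions on the grid Z. Let p_1,…,p_T be independent random variables with p_t distributed according to P_t. Then with probability at least 1 − δ over the predictions, SMCal_{F,2} ≤ 384·(N+1)·log(6·(N+1)·|F|/δ) + 6·PSMCal_{F,2}. -/
open Finset

lemma exp_quad {x : ℝ} (hx : |x| ≤ 1) : Real.exp x ≤ 1 + x + x ^ 2 := by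
  have h := Real.exp_bound hx (n := 2) (by norm_num)
  have hs : ∑ m ∈ Finset.range 2, x ^ m / (m.factorial : ℝ) = 1 + x := by
    simp [Finset.sum_range_succ]
  rw [hs] at h
  norm_num [Nat.factorial] at h
  have h2 : |x| ^ 2 = x ^ 2 := sq_abs x
  have := abs_le.mp h
  nlinarith [this.2, sq_nonneg x]

lemma coordMGF {q v l : ℝ} (hq0 : 0 ≤ q) (hq1 : q ≤ 1) (hv : |v| ≤ 1) (hl : |l| ≤ 1) :
    q * Real.exp (l * (v * (1 - q))) + (1 - q) * Real.exp (l * (v * (0 - q)))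
      ≤ Real.exp (l ^ 2 * q) := by
  have hb1 : |l * (v * (1 - q))| ≤ 1 := by
    rw [abs_mul, abs_mul]
    have h1 : |1 - q| ≤ 1 := by rw [abs_le]; constructor <;> linarith
    calc |l| * (|v| * |1 - q|) ≤ 1 * (1 * 1) := by
          apply mul_le_mul hl _ (by positivity) (by norm_num)
          apply mul_le_mul hv h1 (abs_nonneg _) (by norm_num)
      _ = 1 := by norm_num
  have hb2 : |l * (v * (0 - q))| ≤ 1 := by
    rw [abs_mul, abs_mul]
    have h1 : |0 - q| ≤ 1 := by rw [abs_le]; constructor <;> linarith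
    calc |l| * (|v| * |0 - q|) ≤ 1 * (1 * 1) := by
          apply mul_le_mul hl _ (by positivity) (by norm_num)
          apply mul_le_mul hv h1 (abs_nonneg _) (by norm_num)
      _ = 1 := by norm_num
  have e1 := exp_quad hb1
  have e2 := exp_quad hb2
  have key : q * Real.exp (l * (v * (1 - q))) + (1 - q) * Real.exp (l * (v * (0 - q)))
      ≤ 1 + l ^ 2 * (v ^ 2 * (q * (1 - q))) := by nlinarith
  have hv2 : v ^ 2 ≤ 1 := by nlinarith [sq_abs v, abs_nonneg v]
  have h3 : v ^ 2 * (1 - q) ≤ 1 := by nlinarith [sq_nonneg v]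
  have key2 : l ^ 2 * (v ^ 2 * (q * (1 - q))) ≤ l ^ 2 * q := by
    nlinarith [mul_nonneg (sq_nonneg l) hq0, h3]
  calc _ ≤ 1 + l ^ 2 * (v ^ 2 * (q * (1 - q))) := key
    _ ≤ 1 + l ^ 2 * q := by linarith
    _ ≤ Real.exp (l ^ 2 * q) := by
        have := Real.add_one_le_exp (l ^ 2 * q); linarith

lemma det {n nt A B u : ℝ} (hu : 0 < u) (hn : 0 ≤ n) (hnt : 0 ≤ nt)
    (hA : |A| ≤ nt) (hB : |B| ≤ n)
    (hS : |B - A| ≤ 2 * Real.sqrt (nt * u) + 2 * u)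
    (hD : |n - nt| ≤ 2 * Real.sqrt (nt * u) + 2 * u) :
    n * (B / n) ^ 2 ≤ 384 * u + 6 * (nt * (A / nt) ^ 2) := by
  have hRHS0 : 0 ≤ nt * (A / nt) ^ 2 := mul_nonneg hnt (sq_nonneg _)
  rcases eq_or_lt_of_le hn with hn0 | hn0
  · rw [← hn0]; simp; nlinarith
  set r := Real.sqrt (nt * u) with hr
  have hr0 : 0 ≤ r := Real.sqrt_nonneg _
  have hr2 : r ^ 2 = nt * u := Real.sq_sqrt (mul_nonneg hnt hu.le)
  clear_value r
  have hSl := abs_le.mp hS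
  have hDl := abs_le.mp hD
  have hBl := abs_le.mp hB
  have hAl := abs_le.mp hA
  have hLHS : n * (B / n) ^ 2 = B ^ 2 / n := by field_simp
  rw [hLHS]
  clear hr hS hD hA hB hLHS
  rcases le_or_gt (4 * r + 4 * u) nt with hc | hc
  · -- main case: nt large
    have hnt0 : 0 < nt := by nlinarith
    have hn2 : nt / 2 ≤ n := by nlinarith
    have hRHS : nt * (A / nt) ^ 2 = A ^ 2 / nt := by field_simp
    rw [hRHS]
    have h1 : B ^ 2 ≤ 2 * A ^ 2 + 2 * (2 * r + 2 * u) ^ 2 := by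
      nlinarith [sq_nonneg (A - (B - A)), hSl.1, hSl.2, sq_nonneg (B - A)]
    have h2 : B ^ 2 / n ≤ B ^ 2 / (nt / 2) :=
      div_le_div_of_nonneg_left (sq_nonneg B) (by linarith) hn2
    have h3 : B ^ 2 / (nt / 2) = 2 * B ^ 2 / nt := by field_simp
    have h4 : 2 * B ^ 2 ≤ 4 * A ^ 2 + 28 * u * nt := by nlinarith
    have h5 : 2 * B ^ 2 / nt ≤ (4 * A ^ 2 + 28 * u * nt) / nt := by
      exact div_le_div_of_nonneg_right h4 hnt0.le
    have h6 : (4 * A ^ 2 + 28 * u * nt) / nt = 4 * (A ^ 2 / nt) + 28 * u := by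
      field_simp
    have h7 : 0 ≤ A ^ 2 / nt := by positivity
    have h8 : B ^ 2 / n ≤ 4 * (A ^ 2 / nt) + 28 * u := by
      rw [h3] at h2; rw [h6] at h5; linarith
    linarith
  · -- nt small
    have h9 : r ^ 2 ≤ 4 * r * u + 4 * u ^ 2 := by
      have h10 : nt * u < (4 * r + 4 * u) * u := by
        exact mul_lt_mul_of_pos_right hc hu
      rw [hr2]; nlinarith [h10]
    have hru : r ≤ 5 * u := by nlinarith [sq_nonneg (r - 5 * u), mul_pos hu hu]
    have hnn : n ≤ 36 * u := by linarith [hDl.2]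
    have hfin : B ^ 2 / n ≤ n := by
      rw [div_le_iff₀ hn0]; nlinarith [hBl.1, hBl.2]
    linarith

lemma chernoff {T N : ℕ} (P : Fin T → Fin (N + 1) → ℝ)
    (hP0 : ∀ t i, 0 ≤ P t i) (hP1 : ∀ t, ∑ i, P t i = 1)
    (v : Fin T → ℝ) (hv : ∀ t, |v t| ≤ 1) (p : Fin (N + 1))
    (u : ℝ) (hu : 0 < u) (ε : ℝ) (hε : ε = 1 ∨ ε = -1) :
    ∑ ω : Fin T → Fin (N + 1),
      (if 2 * Real.sqrt ((∑ t, P t p) * u) + 2 * u ≤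
          ε * ∑ t, v t * ((if ω t = p then (1 : ℝ) else 0) - P t p)
       then ∏ t, P t (ω t) else 0) ≤ Real.exp (-u) := by
  classical
  set nt := ∑ t, P t p with hntdef
  have hnt0 : 0 ≤ nt := Finset.sum_nonneg fun t _ => hP0 t p
  set s := 2 * Real.sqrt (nt * u) + 2 * u with hsdef
  set l : ℝ := if nt ≤ u then 1 else Real.sqrt (u / nt) with hldef
  have hq1' : ∀ t, P t p ≤ 1 := by
    intro t
    calc P t p ≤ ∑ i, P t i := Finset.single_le_sum (fun i _ => hP0 t i) (mem_univ p)
      _ = 1 := hP1 t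
  have hl0 : 0 < l := by
    rw [hldef]; split
    · norm_num
    · rename_i h
      exact Real.sqrt_pos.mpr (div_pos hu (by push_neg at h; linarith))
  have hl1 : l ≤ 1 := by
    rw [hldef]; split
    · exact le_refl 1
    · rename_i h
      push_neg at h
      rw [show (1:ℝ) = Real.sqrt 1 from (Real.sqrt_one).symm]
      apply Real.sqrt_le_sqrt
      rw [div_le_one (by linarith)]; linarith
  have hexp : l ^ 2 * nt - l * s ≤ -u := by
    rw [hldef]; split
    · rename_i h
      have hsq : 0 ≤ Real.sqrt (nt * u) := Real.sqrt_nonneg _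
      rw [hsdef]; nlinarith
    · rename_i h
      push_neg at h
      have hntpos : 0 < nt := lt_trans hu h
      have h1 : Real.sqrt (u / nt) ^ 2 = u / nt := Real.sq_sqrt (div_nonneg hu.le hntpos.le)
      have h2 : Real.sqrt (u / nt) * Real.sqrt (nt * u) = u := by
        rw [← Real.sqrt_mul (div_nonneg hu.le hntpos.le)]
        rw [show u / nt * (nt * u) = u ^ 2 by field_simp]
        exact Real.sqrt_sq hu.le
      have h3 : (0:ℝ) ≤ Real.sqrt (u / nt) := Real.sqrt_nonneg _
      have h4 : u / nt * nt = u := by field_simp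
      rw [hsdef]; nlinarith
  -- pointwise bound by exponential
  have step1 : ∑ ω : Fin T → Fin (N + 1),
      (if s ≤ ε * ∑ t, v t * ((if ω t = p then (1 : ℝ) else 0) - P t p)
       then ∏ t, P t (ω t) else 0)
      ≤ ∑ ω : Fin T → Fin (N + 1), (∏ t, P t (ω t)) *
          Real.exp (l * (ε * ∑ t, v t * ((if ω t = p then (1 : ℝ) else 0) - P t p)) - l * s) := by
    apply Finset.sum_le_sum
    intro ω _
    have hW : 0 ≤ ∏ t, P t (ω t) := Finset.prod_nonneg fun t _ => hP0 t (ω t)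
    split
    · rename_i hcond
      nth_rewrite 1 [show (∏ t, P t (ω t)) = (∏ t, P t (ω t)) * 1 by ring]
      apply mul_le_mul_of_nonneg_left _ hW
      have h5 : l * s ≤ l * (ε * ∑ t, v t * ((if ω t = p then (1 : ℝ) else 0) - P t p)) :=
        mul_le_mul_of_nonneg_left hcond hl0.le
      have h6 := Real.add_one_le_exp
        (l * (ε * ∑ t, v t * ((if ω t = p then (1 : ℝ) else 0) - P t p)) - l * s)
      linarith
    · positivity
  -- factorization
  have step2 : ∑ ω : Fin T → Fin (N + 1), (∏ t, P t (ω t)) *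
        Real.exp (l * (ε * ∑ t, v t * ((if ω t = p then (1 : ℝ) else 0) - P t p)))
      = ∏ t, ∑ i, P t i * Real.exp (l * (ε * v t * ((if i = p then (1 : ℝ) else 0) - P t p))) := by
    rw [Finset.prod_univ_sum, Fintype.piFinset_univ]
    apply Finset.sum_congr rfl
    intro ω _
    rw [Finset.prod_mul_distrib, ← Real.exp_sum]
    congr 1
    rw [Finset.mul_sum, Finset.mul_sum]
    congr 1
    apply Finset.sum_congr rfl
    intro t _
    ring
  -- per-factor bound
  have step3 : ∀ t, ∑ i, P t i * Real.exp (l * (ε * v t * ((if i = p then (1 : ℝ) else 0) - P t p)))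
      ≤ Real.exp (l ^ 2 * P t p) := by
    intro t
    have hsplit : ∑ i, P t i * Real.exp (l * (ε * v t * ((if i = p then (1 : ℝ) else 0) - P t p)))
        = P t p * Real.exp (l * (ε * v t * (1 - P t p)))
          + (1 - P t p) * Real.exp (l * (ε * v t * (0 - P t p))) := by
      rw [← Finset.add_sum_erase _ _ (mem_univ p)]
      simp only [if_pos rfl]
      congr 1
      have hrw : ∀ i ∈ univ.erase p,
          P t i * Real.exp (l * (ε * v t * ((if i = p then (1 : ℝ) else 0) - P t p)))
          = P t i * Real.exp (l * (ε * v t * (0 - P t p))) := by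
        intro i hi
        rw [if_neg (Finset.mem_erase.mp hi).1]
      rw [Finset.sum_congr rfl hrw, ← Finset.sum_mul]
      congr 1
      have := Finset.add_sum_erase univ (fun i => P t i) (mem_univ p)
      rw [hP1 t] at this
      linarith
    rw [hsplit]
    apply coordMGF (hP0 t p) (hq1' t)
    · rw [abs_mul]
      rcases hε with h | h <;> rw [h] <;> simp [hv t]
    · rw [abs_of_pos hl0]; exact hl1
  -- combine
  calc ∑ ω : Fin T → Fin (N + 1),
      (if s ≤ ε * ∑ t, v t * ((if ω t = p then (1 : ℝ) else 0) - P t p)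
       then ∏ t, P t (ω t) else 0)
      ≤ ∑ ω : Fin T → Fin (N + 1), (∏ t, P t (ω t)) *
          Real.exp (l * (ε * ∑ t, v t * ((if ω t = p then (1 : ℝ) else 0) - P t p)) - l * s) := step1
    _ = Real.exp (-(l * s)) * ∑ ω : Fin T → Fin (N + 1), (∏ t, P t (ω t)) *
          Real.exp (l * (ε * ∑ t, v t * ((if ω t = p then (1 : ℝ) else 0) - P t p))) := by
        rw [Finset.mul_sum]
        apply Finset.sum_congr rfl
        intro ω _
        rw [Real.exp_sub, Real.exp_neg]
        field_simp
    _ = Real.exp (-(l * s)) *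
          ∏ t, ∑ i, P t i * Real.exp (l * (ε * v t * ((if i = p then (1 : ℝ) else 0) - P t p))) := by
        rw [step2]
    _ ≤ Real.exp (-(l * s)) * ∏ t, Real.exp (l ^ 2 * P t p) := by
        apply mul_le_mul_of_nonneg_left _ (Real.exp_nonneg _)
        apply Finset.prod_le_prod
        · intro t _
          apply Finset.sum_nonneg
          intro i _
          exact mul_nonneg (hP0 t i) (Real.exp_nonneg _)
        · intro t _
          exact step3 t
    _ = Real.exp (l ^ 2 * nt - l * s) := by
        rw [← Real.exp_sum, ← Real.exp_add, hntdef, Finset.mul_sum]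
        congr 1
        ring
    _ ≤ Real.exp (-u) := Real.exp_le_exp.mpr hexp
lemma alg1 {M c d : ℝ} (hM : M ≠ 0) (hc : c ≠ 0) :
    M * ((c + 1) * (2 * (d / (6 * M * c)))) = d * ((2 * (c + 1)) / (6 * c)) := by
  field_simp

set_option maxHeartbeats 1000000 in
open Classical in
theorem stmt0 {X : Type*} (T N : ℕ) (hT : 0 < T) (hN : 0 < N)
    (δ : ℝ) (hδ0 : 0 < δ) (hδ1 : δ < 1)
    (F : Finset (X → ℝ)) (hF : F.Nonempty)
    (hFb : ∀ f ∈ F, ∀ x' : X, f x' ∈ Set.Icc (-1 : ℝ) 1)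
    (x : Fin T → X) (y : Fin T → ℝ) (hy : ∀ t, y t = 0 ∨ y t = 1)
    (P : Fin T → Fin (N + 1) → ℝ)
    (hP0 : ∀ t i, 0 ≤ P t i) (hP1 : ∀ t, ∑ i, P t i = 1) :
    -- empirical conditional correlation for realized predictions `ω`
    let ρ : (X → ℝ) → Fin (N + 1) → (Fin T → Fin (N + 1)) → ℝ := fun f p ω =>
      (∑ t, if ω t = p then f (x t) * (y t - ((p : ℕ) : ℝ) / N) else 0) /
        (∑ t, if ω t = p then (1 : ℝ) else 0)
    -- pseudo conditional correlation
    let ρt : (X → ℝ) → Fin (N + 1) → ℝ := fun f p =>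
      (∑ t, P t p * (f (x t) * (y t - ((p : ℕ) : ℝ) / N))) / (∑ t, P t p)
    -- ℓ₂-swap multicalibration error of the realized predictions `ω`
    let SMCal : (Fin T → Fin (N + 1)) → ℝ := fun ω =>
      ∑ p : Fin (N + 1), (∑ t, if ω t = p then (1 : ℝ) else 0) *
        F.sup' hF (fun f => (ρ f p ω) ^ 2)
    -- ℓ₂-pseudo swap multicalibration error
    let PSMCal : ℝ :=
      ∑ p : Fin (N + 1), (∑ t, P t p) * F.sup' hF (fun f => (ρt f p) ^ 2)
    1 - δ ≤
      ∑ ω : Fin T → Fin (N + 1),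
        if SMCal ω ≤
            384 * ((N : ℝ) + 1) * Real.log (6 * ((N : ℝ) + 1) * (F.card : ℝ) / δ)
              + 6 * PSMCal
        then ∏ t, P t (ω t) else 0 := by
  classical
  intro ρ ρt SMCal PSMCal
  set u := Real.log (6 * ((N : ℝ) + 1) * (F.card : ℝ) / δ) with hudef
  have hcard : 1 ≤ (F.card : ℝ) := by exact_mod_cast hF.card_pos
  have hN1 : (1 : ℝ) ≤ (N : ℝ) := by exact_mod_cast hN
  have hargpos : (0 : ℝ) < 6 * ((N : ℝ) + 1) * (F.card : ℝ) := by nlinarith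
  have hu : 0 < u := by
    apply Real.log_pos
    rw [lt_div_iff₀ hδ0]
    nlinarith
  have hexpu : Real.exp (-u) = δ / (6 * ((N : ℝ) + 1) * (F.card : ℝ)) := by
    rw [hudef, ← Real.log_inv, Real.exp_log (by positivity), inv_div]
  -- notation
  set W : (Fin T → Fin (N + 1)) → ℝ := fun ω => ∏ t, P t (ω t) with hWdef
  have hW0 : ∀ ω, 0 ≤ W ω := fun ω => Finset.prod_nonneg fun t _ => hP0 t (ω t)
  have hWsum : ∑ ω : Fin T → Fin (N + 1), W ω = 1 := by
    rw [hWdef]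
    rw [← Fintype.piFinset_univ, ← Finset.prod_univ_sum]
    simp [hP1]
  set s : Fin (N + 1) → ℝ := fun p => 2 * Real.sqrt ((∑ t, P t p) * u) + 2 * u with hsdef
  set V : Fin (N + 1) → Finset (Fin T → ℝ) := fun p =>
    insert (fun _ => (1 : ℝ)) (F.image fun f => fun t => f (x t) * (y t - ((p : ℕ) : ℝ) / N))
    with hVdef
  have hyb : ∀ (p : Fin (N + 1)) (t : Fin T), |y t - ((p : ℕ) : ℝ) / N| ≤ 1 := by
    intro p t
    have hp0 : (0 : ℝ) ≤ ((p : ℕ) : ℝ) / N := by positivity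
    have hp1 : ((p : ℕ) : ℝ) / N ≤ 1 := by
      rw [div_le_one (by linarith)]
      exact_mod_cast Fin.is_le p
    rcases hy t with h | h <;> rw [h] <;> rw [abs_le] <;> constructor <;> linarith
  have hVb : ∀ p, ∀ v ∈ V p, ∀ t, |v t| ≤ 1 := by
    intro p v hv t
    rw [hVdef] at hv
    rcases Finset.mem_insert.mp hv with h | h
    · rw [h]; norm_num
    · obtain ⟨f, hfF, hfv⟩ := Finset.mem_image.mp h
      rw [← hfv]
      have h1 : |f (x t)| ≤ 1 := by
        have := hFb f hfF (x t)
        rw [abs_le]; exact ⟨this.1, this.2⟩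
      rw [abs_mul]
      calc |f (x t)| * |y t - ((p : ℕ) : ℝ) / N| ≤ 1 * 1 :=
            mul_le_mul h1 (hyb p t) (abs_nonneg _) (by norm_num)
        _ = 1 := by norm_num
  have hVcard : ∀ p, ((V p).card : ℝ) ≤ (F.card : ℝ) + 1 := by
    intro p
    have h1 : (V p).card ≤ F.card + 1 := by
      simp only [hVdef]
      refine le_trans (Finset.card_insert_le _ _) ?_
      exact Nat.add_le_add_right Finset.card_image_le 1
    exact_mod_cast h1
  set Sst : Fin (N + 1) → (Fin T → ℝ) → (Fin T → Fin (N + 1)) → ℝ := fun p v ω =>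
    ∑ t, v t * ((if ω t = p then (1 : ℝ) else 0) - P t p) with hSstdef
  set Good : (Fin T → Fin (N + 1)) → Prop := fun ω =>
    ∀ p, ∀ v ∈ V p, |Sst p v ω| ≤ s p with hGdef
  have hind : ∀ (ω : Fin T → Fin (N + 1)) (c : Prop) [Decidable c],
      0 ≤ (if c then W ω else 0) := by
    intro ω c _; split
    · exact hW0 ω
    · exact le_rfl
  -- Chernoff for each event
  have cher : ∀ p, ∀ v ∈ V p, ∀ ε ∈ ({1, -1} : Finset ℝ),
      ∑ ω : Fin T → Fin (N + 1), (if s p ≤ ε * Sst p v ω then W ω else 0)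
        ≤ Real.exp (-u) := by
    intro p v hv ε hε
    have hε' : ε = 1 ∨ ε = -1 := by
      rcases Finset.mem_insert.mp hε with h | h
      · exact Or.inl h
      · exact Or.inr (Finset.mem_singleton.mp h)
    simpa [hsdef, hSstdef, hWdef] using
      chernoff P hP0 hP1 v (hVb p v hv) p u hu ε hε'
  -- union bound
  have union1 : ∑ ω : Fin T → Fin (N + 1), (if ¬ Good ω then W ω else 0)
      ≤ ∑ ω : Fin T → Fin (N + 1), ∑ p : Fin (N + 1), ∑ v ∈ V p,
          ∑ ε ∈ ({1, -1} : Finset ℝ), (if s p ≤ ε * Sst p v ω then W ω else 0) := by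
    apply Finset.sum_le_sum
    intro ω _
    by_cases hg : Good ω
    · rw [if_neg (not_not_intro hg)]
      apply Finset.sum_nonneg; intro p _
      apply Finset.sum_nonneg; intro v _
      apply Finset.sum_nonneg; intro ε _
      exact hind ω _
    · rw [if_pos hg]
      simp only [hGdef] at hg
      push_neg at hg
      obtain ⟨p, v, hv, hgt⟩ := hg
      have hsp : 0 ≤ s p := by
        rw [hsdef]
        have := Real.sqrt_nonneg ((∑ t, P t p) * u)
        simp only []
        nlinarith
      obtain ⟨ε, hεmem, hcond⟩ : ∃ ε ∈ ({1, -1} : Finset ℝ), s p ≤ ε * Sst p v ω := by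
        rcases abs_cases (Sst p v ω) with ⟨he, _⟩ | ⟨he, _⟩
        · exact ⟨1, by simp, by rw [one_mul, ← he]; exact hgt.le⟩
        · exact ⟨-1, by simp, by rw [neg_one_mul, ← he]; exact hgt.le⟩
      calc W ω = (if s p ≤ ε * Sst p v ω then W ω else 0) := (if_pos hcond).symm
        _ ≤ ∑ ε' ∈ ({1, -1} : Finset ℝ), (if s p ≤ ε' * Sst p v ω then W ω else 0) :=
            Finset.single_le_sum
              (f := fun ε' => if s p ≤ ε' * Sst p v ω then W ω else 0)
              (fun i _ => hind ω _) hεmem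
        _ ≤ ∑ v' ∈ V p, ∑ ε' ∈ ({1, -1} : Finset ℝ),
              (if s p ≤ ε' * Sst p v' ω then W ω else 0) :=
            Finset.single_le_sum
              (f := fun v' => ∑ ε' ∈ ({1, -1} : Finset ℝ),
                (if s p ≤ ε' * Sst p v' ω then W ω else 0))
              (fun v' _ => Finset.sum_nonneg fun ε' _ => hind ω _) hv
        _ ≤ ∑ p' : Fin (N + 1), ∑ v' ∈ V p', ∑ ε' ∈ ({1, -1} : Finset ℝ),
              (if s p' ≤ ε' * Sst p' v' ω then W ω else 0) :=
            Finset.single_le_sum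
              (f := fun p' => ∑ v' ∈ V p', ∑ ε' ∈ ({1, -1} : Finset ℝ),
                (if s p' ≤ ε' * Sst p' v' ω then W ω else 0))
              (fun p' _ => Finset.sum_nonneg fun v' _ =>
                Finset.sum_nonneg fun ε' _ => hind ω _) (mem_univ p)
  have union2 : ∑ ω : Fin T → Fin (N + 1), ∑ p : Fin (N + 1), ∑ v ∈ V p,
        ∑ ε ∈ ({1, -1} : Finset ℝ), (if s p ≤ ε * Sst p v ω then W ω else 0)
      = ∑ p : Fin (N + 1), ∑ v ∈ V p, ∑ ε ∈ ({1, -1} : Finset ℝ),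
          ∑ ω : Fin T → Fin (N + 1), (if s p ≤ ε * Sst p v ω then W ω else 0) := by
    rw [Finset.sum_comm]
    apply Finset.sum_congr rfl
    intro p _
    rw [Finset.sum_comm]
    apply Finset.sum_congr rfl
    intro v _
    rw [Finset.sum_comm]
  have hcard2 : ({1, -1} : Finset ℝ).card = 2 := by norm_num
  have hbad : ∑ ω : Fin T → Fin (N + 1), (if ¬ Good ω then W ω else 0) ≤ δ := by
    have h1 : ∑ p : Fin (N + 1), ∑ v ∈ V p, ∑ ε ∈ ({1, -1} : Finset ℝ),
        ∑ ω : Fin T → Fin (N + 1), (if s p ≤ ε * Sst p v ω then W ω else 0)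
        ≤ ∑ p : Fin (N + 1), ((F.card : ℝ) + 1) * (2 * Real.exp (-u)) := by
      apply Finset.sum_le_sum
      intro p _
      calc ∑ v ∈ V p, ∑ ε ∈ ({1, -1} : Finset ℝ),
            ∑ ω : Fin T → Fin (N + 1), (if s p ≤ ε * Sst p v ω then W ω else 0)
          ≤ ∑ v ∈ V p, (2 * Real.exp (-u)) := by
            apply Finset.sum_le_sum
            intro v hv
            calc ∑ ε ∈ ({1, -1} : Finset ℝ),
                  ∑ ω : Fin T → Fin (N + 1), (if s p ≤ ε * Sst p v ω then W ω else 0)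
                ≤ ∑ ε ∈ ({1, -1} : Finset ℝ), Real.exp (-u) :=
                  Finset.sum_le_sum fun ε hε => cher p v hv ε hε
              _ = 2 * Real.exp (-u) := by
                  rw [Finset.sum_const, hcard2]; ring
        _ = ((V p).card : ℝ) * (2 * Real.exp (-u)) := by
            rw [Finset.sum_const, nsmul_eq_mul]
        _ ≤ ((F.card : ℝ) + 1) * (2 * Real.exp (-u)) := by
            apply mul_le_mul_of_nonneg_right (hVcard p) (by positivity)
    have h2 : ∑ p : Fin (N + 1), ((F.card : ℝ) + 1) * (2 * Real.exp (-u))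
        = ((N : ℝ) + 1) * (((F.card : ℝ) + 1) * (2 * Real.exp (-u))) := by
      rw [Finset.sum_const, Finset.card_univ, Fintype.card_fin, nsmul_eq_mul]
      push_cast
      ring
    have h3 : ((N : ℝ) + 1) * (((F.card : ℝ) + 1) * (2 * Real.exp (-u))) ≤ δ := by
      rw [hexpu]
      have hM : ((N : ℝ) + 1) ≠ 0 := by linarith
      have hc : (F.card : ℝ) ≠ 0 := by linarith
      rw [alg1 hM hc]
      have hfrac : (2 * ((F.card : ℝ) + 1)) / (6 * (F.card : ℝ)) ≤ 1 := by
        rw [div_le_one (by linarith)]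
        linarith
      nlinarith
    calc ∑ ω : Fin T → Fin (N + 1), (if ¬ Good ω then W ω else 0)
        ≤ _ := union1
      _ = _ := union2
      _ ≤ _ := h1
      _ = _ := h2
      _ ≤ δ := h3
  have hgood : 1 - δ ≤ ∑ ω : Fin T → Fin (N + 1), (if Good ω then W ω else 0) := by
    have hsplit : ∑ ω : Fin T → Fin (N + 1), (if Good ω then W ω else 0)
        + ∑ ω : Fin T → Fin (N + 1), (if ¬ Good ω then W ω else 0) = 1 := by
      rw [← Finset.sum_add_distrib, ← hWsum]
      apply Finset.sum_congr rfl
      intro ω _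
      by_cases h : Good ω
      · rw [if_pos h, if_neg (not_not_intro h)]; ring
      · rw [if_neg h, if_pos h]; ring
    linarith
  -- deterministic implication
  have himp : ∀ ω, Good ω → SMCal ω ≤ 384 * ((N : ℝ) + 1) * u + 6 * PSMCal := by
    intro ω hg
    have hper : ∀ p : Fin (N + 1),
        (∑ t, if ω t = p then (1 : ℝ) else 0) * F.sup' hF (fun f => (ρ f p ω) ^ 2)
        ≤ 384 * u + 6 * ((∑ t, P t p) * F.sup' hF (fun f => (ρt f p) ^ 2)) := by
      intro p
      obtain ⟨f₀, hf₀, hsup⟩ := Finset.exists_mem_eq_sup' hF (fun f => (ρ f p ω) ^ 2)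
      rw [hsup]
      have hfb : ∀ t, |f₀ (x t)| ≤ 1 := by
        intro t
        have := hFb f₀ hf₀ (x t)
        rw [abs_le]; exact ⟨this.1, this.2⟩
      have hvb : ∀ t, |f₀ (x t) * (y t - ((p : ℕ) : ℝ) / N)| ≤ 1 := by
        intro t
        rw [abs_mul]
        calc |f₀ (x t)| * |y t - ((p : ℕ) : ℝ) / N| ≤ 1 * 1 :=
              mul_le_mul (hfb t) (hyb p t) (abs_nonneg _) (by norm_num)
          _ = 1 := by norm_num
      set n := ∑ t, if ω t = p then (1 : ℝ) else 0 with hndef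
      set nt := ∑ t, P t p with hntdef
      set B := ∑ t, if ω t = p then f₀ (x t) * (y t - ((p : ℕ) : ℝ) / N) else 0 with hBdef
      set A := ∑ t, P t p * (f₀ (x t) * (y t - ((p : ℕ) : ℝ) / N)) with hAdef
      have hρ : ρ f₀ p ω = B / n := rfl
      have hρt : ρt f₀ p = A / nt := rfl
      have hn : 0 ≤ n := by
        rw [hndef]; apply Finset.sum_nonneg; intro t _; split <;> norm_num
      have hnt : 0 ≤ nt := Finset.sum_nonneg fun t _ => hP0 t p
      have hA : |A| ≤ nt := by
        rw [hAdef, hntdef]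
        calc |∑ t, P t p * (f₀ (x t) * (y t - ((p : ℕ) : ℝ) / N))|
            ≤ ∑ t, |P t p * (f₀ (x t) * (y t - ((p : ℕ) : ℝ) / N))| :=
              Finset.abs_sum_le_sum_abs _ _
          _ ≤ ∑ t, P t p := by
              apply Finset.sum_le_sum
              intro t _
              rw [abs_mul, abs_of_nonneg (hP0 t p)]
              calc P t p * |f₀ (x t) * (y t - ((p : ℕ) : ℝ) / N)| ≤ P t p * 1 :=
                    mul_le_mul_of_nonneg_left (hvb t) (hP0 t p)
                _ = P t p := by ring
      have hB : |B| ≤ n := by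
        rw [hBdef, hndef]
        calc |∑ t, if ω t = p then f₀ (x t) * (y t - ((p : ℕ) : ℝ) / N) else 0|
            ≤ ∑ t, |if ω t = p then f₀ (x t) * (y t - ((p : ℕ) : ℝ) / N) else 0| :=
              Finset.abs_sum_le_sum_abs _ _
          _ ≤ ∑ t, if ω t = p then (1 : ℝ) else 0 := by
              apply Finset.sum_le_sum
              intro t _
              split
              · rename_i h; exact hvb t
              · simp
      have hv1 : (fun t => f₀ (x t) * (y t - ((p : ℕ) : ℝ) / N)) ∈ V p := by
        rw [hVdef]
        exact Finset.mem_insert_of_mem (Finset.mem_image_of_mem _ hf₀)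
      have hSeq : Sst p (fun t => f₀ (x t) * (y t - ((p : ℕ) : ℝ) / N)) ω = B - A := by
        rw [hSstdef, hBdef, hAdef, ← Finset.sum_sub_distrib]
        apply Finset.sum_congr rfl
        intro t _
        by_cases h : ω t = p <;> simp [h] <;> ring
      have hDeq : Sst p (fun _ => (1 : ℝ)) ω = n - nt := by
        rw [hSstdef, hndef, hntdef, ← Finset.sum_sub_distrib]
        apply Finset.sum_congr rfl
        intro t _
        by_cases h : ω t = p <;> simp [h]
      have hseq : s p = 2 * Real.sqrt (nt * u) + 2 * u := by rw [hsdef, hntdef]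
      have hS : |B - A| ≤ 2 * Real.sqrt (nt * u) + 2 * u := by
        rw [← hSeq, ← hseq]; exact hg p _ hv1
      have hD : |n - nt| ≤ 2 * Real.sqrt (nt * u) + 2 * u := by
        rw [← hDeq, ← hseq]; exact hg p (fun _ => (1 : ℝ)) (by rw [hVdef]; exact Finset.mem_insert_self _ _)
      have main := det hu hn hnt hA hB hS hD
      rw [hρ]
      calc n * (B / n) ^ 2 ≤ 384 * u + 6 * (nt * (A / nt) ^ 2) := main
        _ ≤ 384 * u + 6 * (nt * F.sup' hF (fun f => (ρt f p) ^ 2)) := by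
            have hle : (A / nt) ^ 2 ≤ F.sup' hF (fun f => (ρt f p) ^ 2) := by
              rw [← hρt]
              exact Finset.le_sup' (fun f => (ρt f p) ^ 2) hf₀
            have := mul_le_mul_of_nonneg_left hle hnt
            linarith
    calc SMCal ω = ∑ p : Fin (N + 1), (∑ t, if ω t = p then (1 : ℝ) else 0) *
          F.sup' hF (fun f => (ρ f p ω) ^ 2) := rfl
      _ ≤ ∑ p : Fin (N + 1), (384 * u
            + 6 * ((∑ t, P t p) * F.sup' hF (fun f => (ρt f p) ^ 2))) :=
          Finset.sum_le_sum fun p _ => hper p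
      _ = 384 * ((N : ℝ) + 1) * u + 6 * PSMCal := by
          rw [Finset.sum_add_distrib, Finset.sum_const, Finset.card_univ, Fintype.card_fin,
            nsmul_eq_mul, ← Finset.mul_sum]
          push_cast
          ring
  -- conclude
  refine le_trans hgood (Finset.sum_le_sum ?_)
  intro ω _
  by_cases hg : Good ω
  · rw [if_pos hg, if_pos (himp ω hg)]
  · rw [if_neg hg]
    split
    · exact hW0 ω
    · exact le_rfl
end

section
/- Let X be a set and F a class of real-valued functions on X that is closed under affine transformations. Let T and N be positive integers, x_1,…,x_T ∈ X, y_1,…,y_T ∈ {0,1}, P_1,…,P_T probability distributions on the grid Z, and p ∈ Z with Σ_{t=1}^T P_t(p) > 0. Suppose α > 0 and f ∈ F_1 satisfy (Σ_{t=1}^T P_t(p)·f(x_t)·(y_t − p)) / (Σ_{t=1}^T P_t(p)) ≥ α. Then there exists f' ∈ F_4 such that Σ_{t=1}^T P_t(p)·((p − y_t)² − (f'(x_t) − y_t)²) ≥ α² · Σ_{t=1}^T P_t(p). -/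
open Finset

/- **Statement 2.** If `F` is closed under affine transformations, `p ∈ Z` has
positive pseudo mass, and some `f ∈ F₁` has pseudo conditional correlation at
least `α > 0` at `p`, then some `f' ∈ F₄` beats the constant prediction `p` in
pseudo squared loss (conditioned on `p`) by at least `α²`. -/
theorem stmt2 {X : Type*} (F : Set (X → ℝ))
    (hclosed : ∀ f ∈ F, ∀ a b : ℝ, (fun x' => a * f x' + b) ∈ F)
    (T N : ℕ) (hT : 0 < T) (hN : 0 < N)
    (x : Fin T → X) (y : Fin T → ℝ) (hy : ∀ t, y t = 0 ∨ y t = 1)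
    (P : Fin T → Fin (N + 1) → ℝ)
    (hP0 : ∀ t i, 0 ≤ P t i) (hP1 : ∀ t, ∑ i, P t i = 1)
    (p : Fin (N + 1)) (hpos : 0 < ∑ t, P t p)
    (α : ℝ) (hα : 0 < α)
    (f : X → ℝ) (hfF : f ∈ F) (hf1 : ∀ x' : X, (f x') ^ 2 ≤ 1)
    (hcorr : α ≤ (∑ t, P t p * (f (x t) * (y t - ((p : ℕ) : ℝ) / N))) / (∑ t, P t p)) :
    ∃ f' ∈ F, (∀ x' : X, (f' x') ^ 2 ≤ 4) ∧
      α ^ 2 * (∑ t, P t p) ≤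
        ∑ t, P t p * ((((p : ℕ) : ℝ) / N - y t) ^ 2 - (f' (x t) - y t) ^ 2) := by
  set q : ℝ := ((p : ℕ) : ℝ) / N with hq
  have hNpos : (0 : ℝ) < N := by exact_mod_cast hN
  have hq0 : 0 ≤ q := by positivity
  have hq1 : q ≤ 1 := by
    rw [hq, div_le_one hNpos]
    exact_mod_cast Nat.lt_succ_iff.mp p.2
  set S : ℝ := ∑ t, P t p with hS
  set A : ℝ := ∑ t, P t p * (f (x t) * (y t - q)) with hA
  have hAS : α * S ≤ A := by
    have := mul_le_mul_of_nonneg_right hcorr hpos.le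
    rwa [div_mul_cancel₀ _ hpos.ne'] at this
  -- bound |f| ≤ 1 and |y t - q| ≤ 1, hence each term of A ≤ P t p
  have hfabs : ∀ x' : X, -1 ≤ f x' ∧ f x' ≤ 1 := by
    intro x'
    constructor <;> nlinarith [hf1 x']
  have hterm : ∀ t, P t p * (f (x t) * (y t - q)) ≤ P t p := by
    intro t
    have h1 := hfabs (x t)
    have hy' := hy t
    have hb : f (x t) * (y t - q) ≤ 1 := by
      rcases hy' with h | h <;> rw [h] <;> nlinarith [h1.1, h1.2]
    nlinarith [hP0 t p]
  have hA_le_S : A ≤ S := by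
    rw [hA, hS]; exact Finset.sum_le_sum fun t _ => hterm t
  have hα1 : α ≤ 1 := by
    by_contra h
    push_neg at h
    nlinarith
  refine ⟨fun x' => α * f x' + q, hclosed f hfF α q, ?_, ?_⟩
  · intro x'
    show (α * f x' + q) ^ 2 ≤ 4
    have h1 := hfabs x'
    have hl : -1 ≤ α * f x' := by nlinarith [h1.1, h1.2]
    have hu : α * f x' ≤ 1 := by nlinarith [h1.1, h1.2]
    nlinarith [hl, hu, hq0, hq1]
  · have hB : ∑ t, P t p * (f (x t)) ^ 2 ≤ S := by
      rw [hS]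
      refine Finset.sum_le_sum fun t _ => ?_
      nlinarith [hP0 t p, hf1 (x t)]
    have hrw : ∑ t, P t p * ((q - y t) ^ 2 - ((α * f (x t) + q) - y t) ^ 2)
        = 2 * α * A - α ^ 2 * ∑ t, P t p * (f (x t)) ^ 2 := by
      rw [hA, Finset.mul_sum, Finset.mul_sum, ← Finset.sum_sub_distrib]
      exact Finset.sum_congr rfl fun t _ => by ring
    calc α ^ 2 * S ≤ 2 * α * A - α ^ 2 * ∑ t, P t p * (f (x t)) ^ 2 := by
          nlinarith [hAS, hB]
      _ = _ := hrw.symm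
end

section
/- Let X be a set and F a class of real-valued functions on X that is closed under affine transformations. Let T and N be positive integers, x_1,…,x_T ∈ X, y_1,…,y_T ∈ {0,1}, P_1,…,P_T probability distributions on the grid Z, and α > 0. Assume that for every family (g_p)_{p∈Z} with g_p ∈ F_4 for each p ∈ Z, Σ_{t=1}^T Σ_{p∈Z} P_t(p)·((p − y_t)² − (g_p(x_t) − y_t)²) ≤ α. Then for every family (f_p)_{p∈Z} with f_p ∈ F_1 for each p ∈ Z, Σ_{p∈Z} (Σ_{t=1}^T P_t(p)) · ρ̃_{p,f_p}² ≤ α. -/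
open Finset

/- For each grid point `p`, compete with the affine modification `g_p = ρ̃_p f_p + p` of `f_p`.
With `S = Σ_t P_t(p)`, its gain over predicting `p` is
`2 ρ̃_p Σ_t P_t(p) f_p(x_t) (y_t - p) - ρ̃_p² Σ_t P_t(p) f_p(x_t)² = 2 S ρ̃_p² - ρ̃_p² Σ_t P_t(p) f_p(x_t)²`,
which is at least `S ρ̃_p²` because `f_p² ≤ 1`. Since `|ρ̃_p| ≤ 1` and `p ∈ [0, 1]`, `g_p` lies in
`F₄`, so the regret hypothesis bounds the sum of these gains by `α`. -/

lemma abs_sum_mul_div_sum_le_one {ι : Type*} (s : Finset ι) (w v : ι → ℝ)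
    (hw : ∀ i ∈ s, 0 ≤ w i) (hv : ∀ i ∈ s, |v i| ≤ 1) :
    |(∑ i ∈ s, w i * v i) / ∑ i ∈ s, w i| ≤ 1 := by
  rw [abs_div, abs_of_nonneg (sum_nonneg hw)]
  refine div_le_one_of_le₀ ?_ (sum_nonneg hw)
  calc |∑ i ∈ s, w i * v i| ≤ ∑ i ∈ s, |w i * v i| := abs_sum_le_sum_abs _ _
    _ ≤ ∑ i ∈ s, w i := sum_le_sum fun i hi => by
      rw [abs_mul, abs_of_nonneg (hw i hi)]
      exact mul_le_of_le_one_right (hw i hi) (hv i hi)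

lemma two_mul_sum_sub_sq_mul_sum_le_sum_sq_sub_sq {ι : Type*} (s : Finset ι) (w u r : ι → ℝ)
    (hw : ∀ i ∈ s, 0 ≤ w i) (hu : ∀ i ∈ s, u i ^ 2 ≤ 1) (ρ : ℝ) :
    2 * ρ * ∑ i ∈ s, w i * (u i * r i) - ρ ^ 2 * ∑ i ∈ s, w i ≤
      ∑ i ∈ s, w i * (r i ^ 2 - (r i - ρ * u i) ^ 2) := by
  have expand : ∀ i, w i * (r i ^ 2 - (r i - ρ * u i) ^ 2) =
      2 * ρ * (w i * (u i * r i)) - ρ ^ 2 * (w i * u i ^ 2) := fun i => by ring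
  have hwu : ∑ i ∈ s, w i * u i ^ 2 ≤ ∑ i ∈ s, w i :=
    sum_le_sum fun i hi => mul_le_of_le_one_right (hw i hi) (hu i hi)
  simp only [expand, sum_sub_distrib, ← mul_sum]
  gcongr

lemma sum_mul_sq_div_sum_le_sum_sq_sub_sq {ι : Type*} (s : Finset ι) (w u r : ι → ℝ)
    (hw : ∀ i ∈ s, 0 ≤ w i) (hu : ∀ i ∈ s, u i ^ 2 ≤ 1) :
    (∑ i ∈ s, w i) * ((∑ i ∈ s, w i * (u i * r i)) / ∑ i ∈ s, w i) ^ 2 ≤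
      ∑ i ∈ s, w i * (r i ^ 2 -
        (r i - (∑ j ∈ s, w j * (u j * r j)) / (∑ j ∈ s, w j) * u i) ^ 2) := by
  refine le_of_eq_of_le ?_ (two_mul_sum_sub_sq_mul_sum_le_sum_sq_sub_sq s w u r hw hu _)
  rcases eq_or_ne (∑ i ∈ s, w i) 0 with hS | hS
  · simp [hS]
  · field_simp
    ring

lemma natCast_div_mem_Icc {N : ℕ} (p : Fin (N + 1)) : ((p : ℕ) : ℝ) / N ∈ Set.Icc 0 1 :=
  ⟨by positivity, div_le_one_of_le₀ (by exact_mod_cast Nat.lt_succ_iff.mp p.2) (by positivity)⟩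

theorem stmt3_general {X : Type*} (F : Set (X → ℝ))
    (hclosed : ∀ f ∈ F, ∀ a b : ℝ, (fun x' => a * f x' + b) ∈ F)
    (T N : ℕ)
    (x : Fin T → X) (y : Fin T → ℝ) (hy : ∀ t, y t = 0 ∨ y t = 1)
    (P : Fin T → Fin (N + 1) → ℝ)
    (hP0 : ∀ t i, 0 ≤ P t i)
    (α : ℝ)
    (hreg : ∀ g : Fin (N + 1) → X → ℝ,
      (∀ p, g p ∈ F ∧ ∀ x' : X, (g p x') ^ 2 ≤ 4) →
      ∑ t, ∑ p : Fin (N + 1),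
          P t p * ((((p : ℕ) : ℝ) / N - y t) ^ 2 - (g p (x t) - y t) ^ 2) ≤ α) :
    ∀ f : Fin (N + 1) → X → ℝ,
      (∀ p, f p ∈ F ∧ ∀ x' : X, (f p x') ^ 2 ≤ 1) →
      ∑ p : Fin (N + 1), (∑ t, P t p) *
          ((∑ t, P t p * (f p (x t) * (y t - ((p : ℕ) : ℝ) / N))) /
            (∑ t, P t p)) ^ 2 ≤ α := by
  intro f hf
  set ρ : Fin (N + 1) → ℝ := fun p =>
    (∑ t, P t p * (f p (x t) * (y t - ((p : ℕ) : ℝ) / N))) / ∑ t, P t p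
  have hf_abs : ∀ p x', |f p x'| ≤ 1 := fun p x' => (sq_le_one_iff_abs_le_one _).mp ((hf p).2 x')
  have hρ_abs : ∀ p, |ρ p| ≤ 1 := fun p =>
    abs_sum_mul_div_sum_le_one _ _ _ (fun t _ => hP0 t p) fun t _ => by
      obtain ⟨h0, h1⟩ := natCast_div_mem_Icc p
      rw [abs_mul]
      refine mul_le_one₀ (hf_abs p _) (abs_nonneg _) (abs_le.mpr ?_)
      rcases hy t with h | h <;> rw [h] <;> constructor <;> linarith
  have hg : ∀ p, (fun x' => ρ p * f p x' + ((p : ℕ) : ℝ) / N) ∈ F ∧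
      ∀ x', (ρ p * f p x' + ((p : ℕ) : ℝ) / N) ^ 2 ≤ 4 := fun p =>
    ⟨hclosed _ (hf p).1 _ _, fun x' => by
      have hρf := abs_le.mp ((abs_mul _ _).trans_le (mul_le_one₀ (hρ_abs p) (abs_nonneg _)
        (hf_abs p x')))
      obtain ⟨h0, h1⟩ := natCast_div_mem_Icc p
      nlinarith⟩
  refine le_trans (sum_le_sum fun p _ => ?_) (sum_comm.trans_le (hreg _ hg))
  refine (sum_mul_sq_div_sum_le_sum_sq_sub_sq _ _ (fun t => f p (x t)) _
    (fun t _ => hP0 t p) fun t _ => (hf p).2 (x t)).trans_eq (sum_congr rfl fun t _ => ?_)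
  ring

theorem stmt3 {X : Type*} (F : Set (X → ℝ))
    (hclosed : ∀ f ∈ F, ∀ a b : ℝ, (fun x' => a * f x' + b) ∈ F)
    (T N : ℕ) (hT : 0 < T) (hN : 0 < N)
    (x : Fin T → X) (y : Fin T → ℝ) (hy : ∀ t, y t = 0 ∨ y t = 1)
    (P : Fin T → Fin (N + 1) → ℝ)
    (hP0 : ∀ t i, 0 ≤ P t i) (hP1 : ∀ t, ∑ i, P t i = 1)
    (α : ℝ) (hα : 0 < α)
    (hreg : ∀ g : Fin (N + 1) → X → ℝ,
      (∀ p, g p ∈ F ∧ ∀ x' : X, (g p x') ^ 2 ≤ 4) →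
      ∑ t, ∑ p : Fin (N + 1),
          P t p * ((((p : ℕ) : ℝ) / N - y t) ^ 2 - (g p (x t) - y t) ^ 2) ≤ α) :
    ∀ f : Fin (N + 1) → X → ℝ,
      (∀ p, f p ∈ F ∧ ∀ x' : X, (f p x') ^ 2 ≤ 1) →
      ∑ p : Fin (N + 1), (∑ t, P t p) *
          ((∑ t, P t p * (f p (x t) * (y t - ((p : ℕ) : ℝ) / N))) /
            (∑ t, P t p)) ^ 2 ≤ α :=
  stmt3_general F hclosed T N x y hy P hP0 α hreg
end

section
/- Let T and N be positive integers, z_i = i/N for i = 0,…,N, X a set, x_1,…,x_T ∈ X and y_1,…,y_T ∈ {0,1}. For each t ∈ {1,…,T} and i ∈ {0,…,N} let q_{t,i} = (q_{t,i,0},…,q_{t,i,N}) be a probability vector on {0,…,N}, and let p_t = (p_{t,0},…,p_{t,N}) be a probability vector satisfying the fixed-point equation p_{t,j} = Σ_{i=0}^N q_{t,i,j}·p_{t,i} for all j ∈ {0,…,N}. Then for every family of functions f_0,…,f_N : X → ℝ, Σ_{t=1}^T Σ_{i=0}^N p_{t,i}·((z_i − y_t)² − (f_i(x_t) − y_t)²)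 ≤ Σ_{i=0}^N ( Σ_{t=1}^T p_{t,i}·(Σ_{j=0}^N q_{t,i,j}·(z_j − y_t)²) − Σ_{t=1}^T p_{t,i}·(f_i(x_t) − y_t)² ). In particular, the pseudo contextual swap regret of the Blum–Mansour combination is at most the sum of the scaled external regrets of the N+1 component algorithms. -/
open Finset

/- **Statement 4.** Blum–Mansour bound: if `p_t` is a stationary distribution
of the column-stochastic matrix with columns `q_{t,0},…,q_{t,N}`, then the
pseudo contextual swap regret is bounded by the sum over `i` of the scaled
external regrets of the `N+1` component algorithms. -/
theorem stmt4 {X : Type*} (T N : ℕ) (hT : 0 < T) (hN : 0 < N)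
    (x : Fin T → X) (y : Fin T → ℝ) (hy : ∀ t, y t = 0 ∨ y t = 1)
    (q : Fin T → Fin (N + 1) → Fin (N + 1) → ℝ)
    (hq0 : ∀ t i j, 0 ≤ q t i j) (hq1 : ∀ t i, ∑ j, q t i j = 1)
    (p : Fin T → Fin (N + 1) → ℝ)
    (hp0 : ∀ t i, 0 ≤ p t i) (hp1 : ∀ t, ∑ i, p t i = 1)
    (hfix : ∀ t j, p t j = ∑ i, q t i j * p t i)
    (f : Fin (N + 1) → X → ℝ) :
    ∑ t, ∑ i : Fin (N + 1),
        p t i * ((((i : ℕ) : ℝ) / N - y t) ^ 2 - (f i (x t) - y t) ^ 2)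
      ≤ ∑ i : Fin (N + 1),
          ((∑ t, p t i * ∑ j : Fin (N + 1), q t i j * (((j : ℕ) : ℝ) / N - y t) ^ 2)
            - ∑ t, p t i * (f i (x t) - y t) ^ 2) := by
  apply le_of_eq
  rw [Finset.sum_sub_distrib, Finset.sum_comm (γ := Fin T)]
  simp only [mul_sub, Finset.sum_sub_distrib]
  congr 1
  conv_rhs => rw [Finset.sum_comm]
  conv_lhs => rw [Finset.sum_comm]
  apply Finset.sum_congr rfl
  intro t _
  calc ∑ i : Fin (N + 1), p t i * (((i : ℕ) : ℝ) / N - y t) ^ 2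
      = ∑ j : Fin (N + 1), (∑ i, q t i j * p t i) * (((j : ℕ) : ℝ) / N - y t) ^ 2 := by
        apply Finset.sum_congr rfl; intro j _; rw [← hfix]
    _ = ∑ i : Fin (N + 1), p t i * ∑ j : Fin (N + 1), q t i j * (((j : ℕ) : ℝ) / N - y t) ^ 2 := by
        simp only [Finset.sum_mul, Finset.mul_sum]
        rw [Finset.sum_comm]
        apply Finset.sum_congr rfl; intros; apply Finset.sum_congr rfl; intros; ring
end

section
/- There exists a constant C > 0 such that the following holds. Let X be a measurable space, N and T positive integers, D a probability distribution on X × {0,1}, (A_t)_{t=1}^T an adaptive predictor rule with values in the grid Z, and k a best-response selection for L^cvx. Let (x_1,y_1),…,(x_T,y_T) be i.i.d. with law D and set p_t = A_t((x_1,y_1),…,(x_{t−1},y_{t−1})). Then for every δ ∈ (0, 1/T], with probability at least 1 − δ, the supremum over all families (ℓ_v)_{v∈Z} with ℓ_v ∈ L^cvx of | Σ_{t=1}^T ℓ_{p_t(x_t)}(k_{ℓ_{p_t(x_t)}}(p_t(x_t)), y_t) − Σ_{t=1}^T E_{(x,y)∼D}[ ℓ_{p_t(x)}(k_{ℓ_{p_t(x)}}(p_t(x)),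 y) ] | is at most C·( T/N + √(N·T·log(N/δ)) ). -/
/-! Write `M (v, b)` for the martingale counting the rounds with `(p_t(x_t), y_t) = (v, b)`, minus
the conditional probabilities of that event. Since best responses lie in `[0, 1]`, the loss
`ℓ_v (k_{ℓ_v}(v)) (b)` is a number `φ (v, b) ∈ [-1, 1]`, and the deviation in question is
`∑ φ (v, b) M (v, b)`, hence at most `∑ |M (v, b)|`. That sum is the maximum over the
`2 ^ (2 (N + 1))` sign patterns `ε` of the martingale `∑ ε (v, b) M (v, b)`, whose increments are
bounded by `2`. Azuma–Hoeffding and a union bound give `∑ |M| ≤ √(8 T log (2 ^ (2 (N + 1)) / δ))`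
with probability at least `1 - δ`, and this is `O(T / N + √(N T log (N / δ)))`. -/

open MeasureTheory Finset

/-- The class `L^cvx`: losses `ℓ : [0,1] × {0,1} → [-1,1]` that are convex and
`1`-Lipschitz in the prediction for each label `y ∈ {0,1}`. -/
def IsLcvx (ℓ : ℝ → ℝ → ℝ) : Prop :=
  (∀ p ∈ Set.Icc (0 : ℝ) 1, ∀ y : ℝ, (y = 0 ∨ y = 1) → ℓ p y ∈ Set.Icc (-1 : ℝ) 1) ∧
  (∀ y : ℝ, (y = 0 ∨ y = 1) → ConvexOn ℝ (Set.Icc (0 : ℝ) 1) (fun p => ℓ p y)) ∧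
  (∀ y : ℝ, (y = 0 ∨ y = 1) → ∀ p ∈ Set.Icc (0 : ℝ) 1, ∀ q ∈ Set.Icc (0 : ℝ) 1,
    |ℓ p y - ℓ q y| ≤ |p - q|)

/-- `k` is a best-response selection for `L^cvx`. -/
def IsBestResponse (k : (ℝ → ℝ → ℝ) → ℝ → ℝ) : Prop :=
  ∀ ℓ : ℝ → ℝ → ℝ, IsLcvx ℓ → ∀ q ∈ Set.Icc (0 : ℝ) 1,
    k ℓ q ∈ Set.Icc (0 : ℝ) 1 ∧
    ∀ p ∈ Set.Icc (0 : ℝ) 1,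
      q * ℓ (k ℓ q) 1 + (1 - q) * ℓ (k ℓ q) 0 ≤ q * ℓ p 1 + (1 - q) * ℓ p 0

open scoped ENNReal NNReal
open ProbabilityTheory

section AdaptiveSum

variable {Ω : Type*}

def history {T : ℕ} (ω : Fin T → Ω) (t : Fin T) : Fin t → Ω :=
  fun s => ω ⟨s, s.2.trans t.2⟩

def adaptiveSum (f : (t : ℕ) → (Fin t → Ω) → Ω → ℝ) (T : ℕ) (ω : Fin T → Ω) : ℝ :=
  ∑ t : Fin T, f t (history ω t) (ω t)

lemma history_snoc_castSucc {T : ℕ} (h : Fin T → Ω) (x : Ω) (t : Fin T) :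
    history (Fin.snoc h x : Fin (T + 1) → Ω) t.castSucc = history h t :=
  funext fun s => Fin.snoc_castSucc (α := fun _ => Ω) x h ⟨s, s.2.trans t.2⟩

lemma history_snoc_last {T : ℕ} (h : Fin T → Ω) (x : Ω) :
    history (Fin.snoc h x : Fin (T + 1) → Ω) (Fin.last T) = h :=
  funext fun s => Fin.snoc_castSucc (α := fun _ => Ω) x h s

lemma adaptiveSum_snoc (f : (t : ℕ) → (Fin t → Ω) → Ω → ℝ) {T : ℕ} (h : Fin T → Ω) (x : Ω) :
    adaptiveSum f (T + 1) (Fin.snoc h x) = adaptiveSum f T h + f T h x := by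
  simp only [adaptiveSum, Fin.sum_univ_castSucc, history_snoc_castSucc, history_snoc_last,
    Fin.snoc_castSucc, Fin.snoc_last, Fin.val_castSucc, Fin.val_last]

variable [MeasurableSpace Ω]

lemma measurable_adaptiveSum {f : (t : ℕ) → (Fin t → Ω) → Ω → ℝ}
    (hf : ∀ t, Measurable fun p : (Fin t → Ω) × Ω => f t p.1 p.2) (T : ℕ) :
    Measurable (adaptiveSum f T) :=
  Finset.measurable_sum _ fun t _ => (hf t).comp (f := fun ω => (history ω t, ω t)) <|
    (measurable_pi_lambda _ fun _ => measurable_pi_apply _).prodMk (measurable_pi_apply t)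

lemma lintegral_pi_fin_succ (μ : Measure Ω) [SigmaFinite μ] {T : ℕ}
    {F : (Fin (T + 1) → Ω) → ℝ≥0∞} (hF : Measurable F) :
    ∫⁻ ω, F ω ∂(Measure.pi fun _ => μ) =
      ∫⁻ h, ∫⁻ x, F (Fin.snoc h x) ∂μ ∂(Measure.pi fun _ => μ) := by
  set e := MeasurableEquiv.piFinSuccAbove (fun _ : Fin (T + 1) => Ω) (Fin.last T)
  have he := (measurePreserving_piFinSuccAbove (fun _ => μ) (Fin.last T)).symm
  rw [← he.lintegral_comp hF, lintegral_prod_symm (fun p => F (e.symm p))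
    (hF.comp e.symm.measurable).aemeasurable]
  simp [e, Fin.insertNthEquiv, Fin.insertNth_last']

end AdaptiveSum

section Azuma

variable {Ω : Type*} [MeasurableSpace Ω] (μ : Measure Ω) [IsProbabilityMeasure μ]

lemma lintegral_exp_mul_le_of_abs_le {f : Ω → ℝ} {c : ℝ} (hc : 0 ≤ c) (hf : Measurable f)
    (hbdd : ∀ x, |f x| ≤ c) (hmean : ∫ x, f x ∂μ = 0) (l : ℝ) :
    ∫⁻ x, ENNReal.ofReal (Real.exp (l * f x)) ∂μ ≤
      ENNReal.ofReal (Real.exp (c ^ 2 * l ^ 2 / 2)) := by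
  have h := hasSubgaussianMGF_of_mem_Icc_of_integral_eq_zero hf.aemeasurable
    (ae_of_all μ fun x => abs_le.1 (hbdd x)) hmean
  rw [← ofReal_integral_eq_lintegral_ofReal (h.integrable_exp_mul l)
    (ae_of_all μ fun _ => (Real.exp_pos _).le)]
  gcongr
  have hparam : (((‖c - -c‖₊ / 2) ^ 2 : ℝ≥0) : ℝ) = c ^ 2 := by
    rw [NNReal.coe_pow, NNReal.coe_div, coe_nnnorm, Real.norm_eq_abs, sub_neg_eq_add,
      abs_of_nonneg (by linarith), NNReal.coe_ofNat]
    ring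
  calc _ = mgf f μ l := rfl
    _ ≤ _ := h.mgf_le l
    _ = _ := by rw [hparam]

variable {f : (t : ℕ) → (Fin t → Ω) → Ω → ℝ} {c : ℝ}

lemma lintegral_exp_adaptiveSum_le (hf : ∀ t, Measurable fun p : (Fin t → Ω) × Ω => f t p.1 p.2)
    (hbdd : ∀ t h x, |f t h x| ≤ c) (hmean : ∀ t h, ∫ x, f t h x ∂μ = 0)
    (hc : 0 ≤ c) (l : ℝ) (T : ℕ) :
    ∫⁻ ω, ENNReal.ofReal (Real.exp (l * adaptiveSum f T ω)) ∂(Measure.pi fun _ : Fin T => μ) ≤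
      ENNReal.ofReal (Real.exp (T * (c ^ 2 * l ^ 2 / 2))) := by
  have hmeas (T : ℕ) : Measurable fun ω : Fin T → Ω =>
      ENNReal.ofReal (Real.exp (l * adaptiveSum f T ω)) :=
    (((measurable_adaptiveSum hf T).const_mul l).exp).ennreal_ofReal
  induction T with
  | zero => simp [adaptiveSum]
  | succ T ih =>
    have hstep (h : Fin T → Ω) :
        ∫⁻ x, ENNReal.ofReal (Real.exp (l * adaptiveSum f (T + 1) (Fin.snoc h x))) ∂μ ≤
          ENNReal.ofReal (Real.exp (l * adaptiveSum f T h)) *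
            ENNReal.ofReal (Real.exp (c ^ 2 * l ^ 2 / 2)) := by
      have hfh : Measurable (f T h) := (hf T).comp measurable_prodMk_left
      simp_rw [adaptiveSum_snoc, mul_add, Real.exp_add, ENNReal.ofReal_mul (Real.exp_pos _).le]
      rw [lintegral_const_mul _ ((hfh.const_mul l).exp.ennreal_ofReal)]
      gcongr
      exact lintegral_exp_mul_le_of_abs_le μ hc hfh (hbdd T h) (hmean T h) l
    calc _ = ∫⁻ h, ∫⁻ x, ENNReal.ofReal (Real.exp (l * adaptiveSum f (T + 1) (Fin.snoc h x))) ∂μ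
          ∂(Measure.pi fun _ : Fin T => μ) := lintegral_pi_fin_succ μ (hmeas (T + 1))
      _ ≤ (∫⁻ h, ENNReal.ofReal (Real.exp (l * adaptiveSum f T h))
            ∂(Measure.pi fun _ : Fin T => μ)) * ENNReal.ofReal (Real.exp (c ^ 2 * l ^ 2 / 2)) := by
        rw [← lintegral_mul_const _ (hmeas T)]
        exact lintegral_mono hstep
      _ ≤ ENNReal.ofReal (Real.exp (T * (c ^ 2 * l ^ 2 / 2))) *
            ENNReal.ofReal (Real.exp (c ^ 2 * l ^ 2 / 2)) := mul_le_mul_left ih _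
      _ = ENNReal.ofReal (Real.exp ((T + 1 : ℕ) * (c ^ 2 * l ^ 2 / 2))) := by
        rw [← ENNReal.ofReal_mul (Real.exp_pos _).le, ← Real.exp_add]
        congr 2
        push_cast
        ring

lemma measure_adaptiveSum_ge_le (hf : ∀ t, Measurable fun p : (Fin t → Ω) × Ω => f t p.1 p.2)
    (hbdd : ∀ t h x, |f t h x| ≤ c) (hmean : ∀ t h, ∫ x, f t h x ∂μ = 0)
    (hc : 0 < c) {T : ℕ} (hT : 0 < T) {s : ℝ} (hs : 0 ≤ s) :
    (Measure.pi fun _ : Fin T => μ) {ω | s ≤ adaptiveSum f T ω} ≤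
      ENNReal.ofReal (Real.exp (-s ^ 2 / (2 * T * c ^ 2))) := by
  set l := s / (T * c ^ 2)
  have hl : 0 ≤ l := by positivity
  calc _ ≤ (Measure.pi fun _ : Fin T => μ)
        {ω | ENNReal.ofReal (Real.exp (l * s)) ≤
          ENNReal.ofReal (Real.exp (l * adaptiveSum f T ω))} :=
        measure_mono fun ω (hω : s ≤ _) =>
          ENNReal.ofReal_le_ofReal (Real.exp_le_exp.2 (mul_le_mul_of_nonneg_left hω hl))
    _ ≤ (∫⁻ ω, ENNReal.ofReal (Real.exp (l * adaptiveSum f T ω))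
          ∂(Measure.pi fun _ : Fin T => μ)) / ENNReal.ofReal (Real.exp (l * s)) :=
        meas_ge_le_lintegral_div
          (((measurable_adaptiveSum hf T).const_mul l).exp.ennreal_ofReal).aemeasurable
          (by simp [Real.exp_pos]) ENNReal.ofReal_ne_top
    _ ≤ ENNReal.ofReal (Real.exp (T * (c ^ 2 * l ^ 2 / 2))) /
          ENNReal.ofReal (Real.exp (l * s)) := by
        gcongr
        exact lintegral_exp_adaptiveSum_le μ hf hbdd hmean hc.le l T
    _ = ENNReal.ofReal (Real.exp (-s ^ 2 / (2 * T * c ^ 2))) := by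
        rw [← ENNReal.ofReal_div_of_pos (Real.exp_pos _), ← Real.exp_sub]
        congr 2
        simp only [l]
        field_simp
        ring

end Azuma

section Deviation

variable {Ω V : Type*} [MeasurableSpace Ω] (μ : Measure Ω) (g : (t : ℕ) → (Fin t → Ω) → Ω → V)

noncomputable def deviation (φ : V → ℝ) (T : ℕ) : (Fin T → Ω) → ℝ :=
  adaptiveSum (fun t h z => φ (g t h z) - ∫ z', φ (g t h z') ∂μ) T

variable [MeasurableSpace V] [MeasurableSingletonClass V] [Fintype V]

lemma integral_comp_eq_sum [IsFiniteMeasure μ] {f : Ω → V} (hf : Measurable f) (φ : V → ℝ) :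
    ∫ z, φ (f z) ∂μ = ∑ v, μ.real (f ⁻¹' {v}) * φ v := by
  rw [← integral_map hf.aemeasurable (measurable_of_finite φ).aestronglyMeasurable,
    integral_fintype .of_finite]
  simp [map_measureReal_apply hf (measurableSet_singleton _)]

variable {g}

section Indicators

variable [IsFiniteMeasure μ] [DecidableEq V]

lemma deviation_eq_sum (hg : ∀ t, Measurable fun p : (Fin t → Ω) × Ω => g t p.1 p.2)
    (φ : V → ℝ) (T : ℕ) (ω : Fin T → Ω) :
    deviation μ g φ T ω = ∑ v, φ v * deviation μ g (fun w => if w = v then 1 else 0) T ω := by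
  simp only [deviation, adaptiveSum, Finset.mul_sum]
  rw [Finset.sum_comm]
  refine Finset.sum_congr rfl fun t _ => ?_
  have hgt : Measurable (g t (history ω t)) := (hg t).comp measurable_prodMk_left
  have hind (v : V) : ∫ z, (if g t (history ω t) z = v then (1 : ℝ) else 0) ∂μ =
      μ.real (g t (history ω t) ⁻¹' {v}) := by
    simp [integral_comp_eq_sum μ hgt fun w => if w = v then (1 : ℝ) else 0]
  simp [mul_sub, Finset.sum_sub_distrib, integral_comp_eq_sum μ hgt, hind, mul_comm]

lemma abs_deviation_le_sum_abs (hg : ∀ t, Measurable fun p : (Fin t → Ω) × Ω => g t p.1 p.2)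
    {φ : V → ℝ} (hφ : ∀ v, |φ v| ≤ 1) (T : ℕ) (ω : Fin T → Ω) :
    |deviation μ g φ T ω| ≤ ∑ v, |deviation μ g (fun w => if w = v then 1 else 0) T ω| := by
  rw [deviation_eq_sum μ hg]
  refine (Finset.abs_sum_le_sum_abs _ _).trans (Finset.sum_le_sum fun v _ => ?_)
  rw [abs_mul]
  exact mul_le_of_le_one_left (abs_nonneg _) (hφ v)

lemma sum_abs_deviation_eq (hg : ∀ t, Measurable fun p : (Fin t → Ω) × Ω => g t p.1 p.2)
    (T : ℕ) (ω : Fin T → Ω) :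
    ∑ v, |deviation μ g (fun w => if w = v then 1 else 0) T ω| =
      deviation μ g (fun v => if 0 ≤ deviation μ g (fun w => if w = v then 1 else 0) T ω
        then 1 else -1) T ω := by
  rw [deviation_eq_sum μ hg]
  refine Finset.sum_congr rfl fun v _ => ?_
  split_ifs with h
  · simp [abs_of_nonneg h]
  · simp [abs_of_neg (not_le.1 h)]

end Indicators

variable [IsProbabilityMeasure μ]

lemma measure_deviation_ge_le (hg : ∀ t, Measurable fun p : (Fin t → Ω) × Ω => g t p.1 p.2)
    {φ : V → ℝ} (hφ : ∀ v, |φ v| ≤ 1) {T : ℕ} (hT : 0 < T) {s : ℝ} (hs : 0 ≤ s) :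
    (Measure.pi fun _ : Fin T => μ) {ω | s ≤ deviation μ g φ T ω} ≤
      ENNReal.ofReal (Real.exp (-s ^ 2 / (8 * T))) := by
  have hφg (t : ℕ) : Measurable fun p : (Fin t → Ω) × Ω => φ (g t p.1 p.2) :=
    (measurable_of_finite φ).comp (hg t)
  have hint (t : ℕ) (h : Fin t → Ω) : Integrable (fun z => φ (g t h z)) μ :=
    Integrable.of_finite.comp_measurable ((hg t).comp measurable_prodMk_left)
  have hint_le (t : ℕ) (h : Fin t → Ω) : |∫ z, φ (g t h z) ∂μ| ≤ 1 := by
    simpa using norm_integral_le_of_norm_le_const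
      (ae_of_all μ fun z => (Real.norm_eq_abs _).trans_le (hφ (g t h z)))
  have hmeas (t : ℕ) : Measurable fun p : (Fin t → Ω) × Ω =>
      φ (g t p.1 p.2) - ∫ z, φ (g t p.1 z) ∂μ :=
    (hφg t).sub ((hφg t).stronglyMeasurable.integral_prod_right'.measurable.comp measurable_fst)
  have hbdd (t : ℕ) (h : Fin t → Ω) (z : Ω) : |φ (g t h z) - ∫ z', φ (g t h z') ∂μ| ≤ 2 := by
    linarith [abs_sub (φ (g t h z)) (∫ z', φ (g t h z') ∂μ), hφ (g t h z), hint_le t h]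
  have hmean (t : ℕ) (h : Fin t → Ω) : ∫ z, (φ (g t h z) - ∫ z', φ (g t h z') ∂μ) ∂μ = 0 := by
    simp [integral_sub (hint t h) (integrable_const _)]
  have htail := measure_adaptiveSum_ge_le μ hmeas hbdd hmean two_pos hT hs
  rwa [show (2 : ℝ) * T * 2 ^ 2 = 8 * T by ring] at htail

theorem measure_forall_abs_deviation_le
    (hg : ∀ t, Measurable fun p : (Fin t → Ω) × Ω => g t p.1 p.2) {T : ℕ} (hT : 0 < T) {s : ℝ}
    (hs : 0 ≤ s) :
    1 - ENNReal.ofReal (2 ^ Fintype.card V * Real.exp (-s ^ 2 / (8 * T))) ≤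
      (Measure.pi fun _ : Fin T => μ)
        {ω | ∀ φ : V → ℝ, (∀ v, |φ v| ≤ 1) → |deviation μ g φ T ω| ≤ s} := by
  classical
  set P := Measure.pi fun _ : Fin T => μ
  set good := {ω | ∀ φ : V → ℝ, (∀ v, |φ v| ≤ 1) → |deviation μ g φ T ω| ≤ s}
  let sign (ε : V → Bool) (v : V) : ℝ := if ε v then 1 else -1
  have hsign (ε : V → Bool) (v : V) : |sign ε v| ≤ 1 := by unfold sign; split <;> simp
  -- The bound `∑ v, |deviation 1_v|` on every `|deviation φ|` is itself the deviation of a sign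
  -- pattern, so a union bound over the `2 ^ |V|` sign patterns controls all `φ` at once.
  have hcover : goodᶜ ⊆ ⋃ ε : V → Bool, {ω | s ≤ deviation μ g (sign ε) T ω} := by
    intro ω hω
    simp only [good, Set.mem_compl_iff, Set.mem_ofPred_eq, not_forall, not_le] at hω
    obtain ⟨φ, hφ, hlt⟩ := hω
    refine Set.mem_iUnion.2
      ⟨fun v => decide (0 ≤ deviation μ g (fun w => if w = v then 1 else 0) T ω), ?_⟩
    have hsum := sum_abs_deviation_eq μ hg T ω
    simp only [Set.mem_ofPred_eq, sign, decide_eq_true_eq]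
    linarith [abs_deviation_le_sum_abs μ hg hφ T ω]
  have hbad : P goodᶜ ≤ ENNReal.ofReal (2 ^ Fintype.card V * Real.exp (-s ^ 2 / (8 * T))) :=
    calc P goodᶜ ≤ ∑ ε : V → Bool, P {ω | s ≤ deviation μ g (sign ε) T ω} :=
          (measure_mono hcover).trans (measure_iUnion_fintype_le _ _)
      _ ≤ ∑ _ε : V → Bool, ENNReal.ofReal (Real.exp (-s ^ 2 / (8 * T))) :=
          Finset.sum_le_sum fun ε _ => measure_deviation_ge_le μ hg (hsign ε) hT hs
      _ = _ := by
          rw [ENNReal.ofReal_mul (by positivity)]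
          simp
  calc _ ≤ 1 - P goodᶜ := tsub_le_tsub_left hbad _
    _ ≤ P good := by
      rw [tsub_le_iff_right, ← measure_univ (μ := P)]
      exact measure_univ_le_add_compl good

theorem measure_forall_abs_deviation_le_sqrt_log
    (hg : ∀ t, Measurable fun p : (Fin t → Ω) × Ω => g t p.1 p.2) {T : ℕ} (hT : 0 < T) {δ : ℝ}
    (hδ : 0 < δ) (hδ1 : δ ≤ 1) :
    ENNReal.ofReal (1 - δ) ≤ (Measure.pi fun _ : Fin T => μ)
      {ω | ∀ φ : V → ℝ, (∀ v, |φ v| ≤ 1) →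
        |deviation μ g φ T ω| ≤ √(8 * T * Real.log (2 ^ Fintype.card V / δ))} := by
  have hlog : 0 ≤ Real.log (2 ^ Fintype.card V / δ) :=
    Real.log_nonneg ((one_le_div hδ).2 (hδ1.trans (one_le_pow₀ one_le_two)))
  have htail : 2 ^ Fintype.card V * Real.exp (-√(8 * T * Real.log (2 ^ Fintype.card V / δ)) ^ 2
      / (8 * T)) = δ := by
    have hT' : (0 : ℝ) < T := Nat.cast_pos.2 hT
    rw [Real.sq_sqrt (by positivity), neg_div, mul_div_cancel_left₀ _ (by positivity),
      Real.exp_neg, Real.exp_log (by positivity)]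
    field_simp
  have := measure_forall_abs_deviation_le μ hg hT
    (Real.sqrt_nonneg (8 * T * Real.log (2 ^ Fintype.card V / δ)))
  rwa [htail, ← ENNReal.ofReal_one, ← ENNReal.ofReal_sub _ hδ.le] at this

end Deviation

lemma sqrt_log_two_pow_div_le {N T : ℕ} (hN : 0 < N) (hT : 0 < T) {δ : ℝ} (hδ : 0 < δ)
    (hδT : δ ≤ 1 / T) :
    √(8 * T * Real.log (2 ^ ((N + 1) * 2) / δ)) ≤
      20 * ((T : ℝ) / N + √((N : ℝ) * T * Real.log ((N : ℝ) / δ))) := by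
  have hN1 : (1 : ℝ) ≤ N := Nat.one_le_cast.2 hN
  have hT1 : (1 : ℝ) ≤ T := Nat.one_le_cast.2 hT
  have hTδ : T * δ ≤ 1 := by rwa [le_div_iff₀ (by positivity), mul_comm] at hδT
  have hNT0 : (0 : ℝ) ≤ N * T := by positivity
  set L := Real.log (N / δ) with hL_def
  have hL : 0 ≤ L := Real.log_nonneg ((one_le_div hδ).2 (by nlinarith))
  have hlog : Real.log (2 ^ ((N + 1) * 2) / δ) ≤ 4 * N + L := by
    have h2 : Real.log 2 ≤ 1 := (Real.log_le_sub_one_of_pos two_pos).trans (by norm_num)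
    rw [hL_def, Real.log_div (by positivity) hδ.ne', Real.log_pow,
      Real.log_div (by positivity) hδ.ne']
    push_cast
    nlinarith [Real.log_nonneg hN1]
  have hrad : 8 * T * Real.log (2 ^ ((N + 1) * 2) / δ) ≤ 32 * N * T + 8 * N * T * L := by
    nlinarith [mul_le_mul_of_nonneg_left hlog (by positivity : (0 : ℝ) ≤ 8 * T),
      mul_nonneg (mul_nonneg hL (by positivity : (0 : ℝ) ≤ T)) (sub_nonneg.2 hN1)]
  rcases le_or_gt 1 L with hL1 | hL1
  · calc _ ≤ √(7 ^ 2 * ((N : ℝ) * T * L)) :=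
        Real.sqrt_le_sqrt (by nlinarith [mul_nonneg hNT0 (sub_nonneg.2 hL1)])
      _ = 7 * √((N : ℝ) * T * L) := by
        rw [Real.sqrt_mul' _ (by positivity), Real.sqrt_sq (by norm_num)]
      _ ≤ _ := by nlinarith [show (0 : ℝ) ≤ T / N by positivity, Real.sqrt_nonneg (N * T * L)]
  · have hNδ : (N : ℝ) / δ < 3 := by
      rw [← Real.exp_log (show (0 : ℝ) < N / δ by positivity)]
      exact (Real.exp_lt_exp.2 hL1).trans (Real.exp_one_lt_d9.trans (by norm_num))
    have hNT : N * T ≤ 2 := by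
      have : (N : ℝ) * T < 3 := by
        calc (N : ℝ) * T ≤ N / δ := by rw [le_div_iff₀ hδ]; nlinarith
          _ < 3 := hNδ
      exact Nat.le_of_lt_succ (by exact_mod_cast this)
    have hNT' : (N : ℝ) * T ≤ 2 := by exact_mod_cast hNT
    have hN2 : (N : ℝ) ≤ 2 := by nlinarith
    have hTN : (1 : ℝ) / 2 ≤ T / N := by rw [div_le_div_iff₀ two_pos (by positivity)]; linarith
    calc _ ≤ √(10 ^ 2) := Real.sqrt_le_sqrt (by nlinarith)
      _ = 10 := Real.sqrt_sq (by norm_num)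
      _ ≤ _ := by nlinarith [Real.sqrt_nonneg (N * T * L)]

lemma IsBestResponse.abs_loss_le_one {k : (ℝ → ℝ → ℝ) → ℝ → ℝ} (hk : IsBestResponse k)
    {ℓ : ℝ → ℝ → ℝ} (hℓ : IsLcvx ℓ) {q : ℝ} (hq : q ∈ Set.Icc (0 : ℝ) 1) (b : Bool) :
    |ℓ (k ℓ q) (if b then 1 else 0)| ≤ 1 :=
  abs_le.2 (hℓ.1 _ (hk ℓ hℓ q hq).1 _ (by cases b <;> simp))

theorem stmt12 :
    ∃ C : ℝ, 0 < C ∧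
      ∀ (X : Type) [MeasurableSpace X] (N T : ℕ), 0 < N → 0 < T →
      ∀ (D : Measure (X × Bool)) [IsProbabilityMeasure D],
      ∀ A : (t : ℕ) → (Fin t → X × Bool) → X → Fin (N + 1),
        (∀ t : ℕ, Measurable fun q : (Fin t → X × Bool) × X => A t q.1 q.2) →
      ∀ k : (ℝ → ℝ → ℝ) → ℝ → ℝ, IsBestResponse k →
      ∀ δ : ℝ, 0 < δ → δ ≤ 1 / T →
        ENNReal.ofReal (1 - δ) ≤
          (Measure.pi fun _ : Fin T => D)
            {ω : Fin T → X × Bool |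
              ∀ L : Fin (N + 1) → ℝ → ℝ → ℝ, (∀ v, IsLcvx (L v)) →
                |(∑ t : Fin T,
                    (fun v : Fin (N + 1) =>
                        L v (k (L v) (((v : ℕ) : ℝ) / N))
                          (if (ω t).2 then (1 : ℝ) else 0))
                      (A (t : ℕ) (fun s => ω ⟨(s : ℕ), lt_trans s.2 t.2⟩) (ω t).1))
                  - ∑ t : Fin T, ∫ z : X × Bool,
                      (fun v : Fin (N + 1) =>
                          L v (k (L v) (((v : ℕ) : ℝ) / N))
                            (if z.2 then (1 : ℝ) else 0))
                        (A (t : ℕ) (fun s => ω ⟨(s : ℕ), lt_trans s.2 t.2⟩) z.1) ∂D|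
                ≤ C * ((T : ℝ) / N +
                    Real.sqrt ((N : ℝ) * T * Real.log ((N : ℝ) / δ)))} := by
  refine ⟨20, by norm_num, fun X _ N T hN hT D _ A hA k hk δ hδ hδT => ?_⟩
  have hδ1 : δ ≤ 1 := hδT.trans (div_le_one_of_le₀ (Nat.one_le_cast.2 hT) (Nat.cast_nonneg _))
  have hg (t : ℕ) : Measurable fun p : (Fin t → X × Bool) × (X × Bool) => (A t p.1 p.2.1, p.2.2) :=
    ((hA t).comp (measurable_fst.prodMk (measurable_fst.comp measurable_snd))).prodMk
      (measurable_snd.comp measurable_snd)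
  refine (measure_forall_abs_deviation_le_sqrt_log D (g := fun t h z => (A t h z.1, z.2))
    hg hT hδ hδ1).trans (measure_mono fun ω hω L hL => ?_)
  have hq (v : Fin (N + 1)) : ((v : ℕ) : ℝ) / N ∈ Set.Icc (0 : ℝ) 1 :=
    ⟨by positivity, div_le_one_of_le₀ (by exact_mod_cast v.is_le) (Nat.cast_nonneg _)⟩
  have hdev := hω (fun vb => L vb.1 (k (L vb.1) ((vb.1 : ℕ) / N)) (if vb.2 then 1 else 0))
    fun vb => hk.abs_loss_le_one (hL vb.1) (hq vb.1) vb.2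
  simp only [Fintype.card_prod, Fintype.card_fin, Fintype.card_bool] at hdev
  rw [deviation, adaptiveSum, Finset.sum_sub_distrib] at hdev
  exact hdev.trans (sqrt_log_two_pow_div_le hN hT hδ hδT)
end
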